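/- arXiv:1906.04541 — 13 statements merged into one kernel-verified Lean document; each statement's English description precedes it below -/
import Mathlib

section
/- If X is a subspace of a countably compact Hausdorff space Y and X is first-countable at a point x ∈ X, then X is regular at x, i.e., every neighborhood of x in X contains a closed (in X) neighborhood of x. -/
open Filter Topology

/-!
Suppose every closed neighbourhood of `x` leaves `U`. Along a decreasing countable basis `V n`
of `𝓝 x` pick `a n ∈ closure (V n) \ U`. In the ambient countably compact space the images of
the `a n` have a cluster point, and the Hausdorff property forces it to be `x`, since the `a n`
eventually lie in the closure of every neighbourhood of `x`. But `U` is the trace of an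
ambient neighbourhood of `x` that no `a n` meets.
-/

theorem Filter.HasAntitoneBasis.eventually_mem_closure {X : Type*} [TopologicalSpace X] {x : X}
    {V : ℕ → Set X} (hV : (𝓝 x).HasAntitoneBasis V) {a : ℕ → X}
    (ha : ∀ n, a n ∈ closure (V n)) {W : Set X} (hW : W ∈ 𝓝 x) :
    ∀ᶠ n in atTop, a n ∈ closure W :=
  (hV.tendsto_smallSets.eventually (eventually_smallSets_subset.2 hW)).mono
    fun n hn => closure_mono hn (ha n)

theorem MapClusterPt.eq_of_eventually_mem_closure {Y ι : Type*} [TopologicalSpace Y] [T2Space Y]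
    {l : Filter ι} {u : ι → Y} {x y : Y} (hu : ∀ W ∈ 𝓝 x, ∀ᶠ i in l, u i ∈ closure W)
    (hy : MapClusterPt y l u) : y = x := by
  have hyx : ClusterPt y (𝓝 x) := clusterPt_iff_forall_mem_closure.2 fun W hW => by
    simpa only [closure_closure] using clusterPt_iff_forall_mem_closure.1 hy _ (hu W hW)
  exact eq_of_nhds_neBot hyx

theorem Topology.IsInducing.exists_isClosed_mem_nhds_subset {X Y : Type*} [TopologicalSpace X]
    [TopologicalSpace Y] [T2Space Y] [CountablyCompactSpace Y] {f : X → Y} (hf : IsInducing f)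
    {x : X} [(𝓝 x).IsCountablyGenerated] {U : Set X} (hU : U ∈ 𝓝 x) :
    ∃ C ∈ 𝓝 x, IsClosed C ∧ C ⊆ U := by
  by_contra! hnot
  obtain ⟨V, hV⟩ := (𝓝 x).exists_antitone_basis
  have hescape : ∀ n, ∃ a ∈ closure (V n), a ∉ U := fun n =>
    Set.not_subset.1 (hnot _ (mem_of_superset (hV.mem n) subset_closure) isClosed_closure)
  choose a ha haU using hescape
  obtain ⟨y, -, hy⟩ := CountablyCompactSpace.isCountablyCompact_univ.seq_clusterPt (f ∘ a)
    (Eventually.of_forall fun _ => Set.mem_univ _)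
  have hfa : ∀ W ∈ 𝓝 (f x), ∀ᶠ n in atTop, f (a n) ∈ closure W := fun W hW =>
    (hV.eventually_mem_closure ha (hf.continuous.continuousAt hW)).mono
      fun _ hn => hf.continuous.closure_preimage_subset W hn
  obtain rfl := hy.eq_of_eventually_mem_closure hfa
  obtain ⟨W, hW, hWU⟩ := (hf.nhds_eq_comap x ▸ hU : U ∈ comap f (𝓝 (f x)))
  obtain ⟨n, hn⟩ := (mapClusterPt_iff_frequently.1 hy W hW).exists
  exact haU n (hWU hn)

/-- If `X` is a subspace of a countably compact Hausdorff space `Y` and `X` is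
first-countable at a point `x ∈ X`, then `X` is regular at `x`: every
neighborhood of `x` in `X` contains a closed (in `X`) neighborhood of `x`. -/
theorem stmt0 {Y : Type*} [TopologicalSpace Y] [T2Space Y]
    (hcc : ∀ S : Set Y, S.Infinite → ∃ y : Y, AccPt y (𝓟 S))
    (s : Set Y) (x : s) (hfc : (𝓝 x).IsCountablyGenerated) :
    ∀ U ∈ 𝓝 x, ∃ C ∈ 𝓝 x, IsClosed C ∧ C ⊆ U := by
  have : CountablyCompactSpace Y := isCountablyCompact_univ_iff.1 <|
    isCountablyCompact_iff_infinite_subset_has_accPt.2 fun S _ hS =>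
      (hcc S hS).imp fun _ hy => ⟨Set.mem_univ _, hy⟩
  exact fun U hU => IsInducing.subtypeVal.exists_isClosed_mem_nhds_subset hU
end

section
/- If X is a first-countable subspace of a countably compact Hausdorff space, then X is a regular topological space. -/
open Filter Topology

/-!
Let `U` be a neighbourhood of `x` in `X`, and `Vₙ` a decreasing neighbourhood base at `x` in
`X`. These sets shrink to `x` in the ambient space `Y`, and in a countably compact Hausdorff
space so do their closures: otherwise points `pₖ ∈ closure V_{nₖ}` outside a fixed neighbourhood
of `x` have a cluster point `y ≠ x`, and separating `x` from `y` by disjoint open sets `G ∋ x`,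
`H ∋ y` keeps all but finitely many `pₖ` in `closure G`, away from `H`. Hence some `closure Vₙ`,
which is the trace on `X` of its closure in `Y`, lies in `U`.
-/

theorem Filter.Tendsto.closure_smallSets {Y : Type*} [TopologicalSpace Y] [T2Space Y]
    [CountablyCompactSpace Y] {x : Y} {W : ℕ → Set Y}
    (hW : Tendsto W atTop (𝓝 x).smallSets) :
    Tendsto (fun n => closure (W n)) atTop (𝓝 x).smallSets := by
  refine tendsto_smallSets_iff.2 fun O hO => ?_
  by_contra h
  obtain ⟨φ, hφ, hbad⟩ := extraction_of_frequently_atTop (not_eventually.1 h)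
  choose p hpW hpO using fun k => Set.not_subset.1 (hbad k)
  obtain ⟨y, -, hy⟩ := CountablyCompactSpace.isCountablyCompact_univ.seq_clusterPt p
    (Eventually.of_forall fun _ => Set.mem_univ _)
  have hyx : y ≠ x := by
    rintro rfl
    obtain ⟨k, hk⟩ := (hy.frequently hO).exists
    exact hpO k hk
  obtain ⟨G, H, hG, hH, hxG, hyH, hGH⟩ := t2_separation hyx.symm
  have hp_notMem_H : ∀ᶠ k in atTop, p k ∉ H :=
    (tendsto_smallSets_iff.1 (hW.comp hφ.tendsto_atTop) G (hG.mem_nhds hxG)).mono fun k hk =>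
      (hGH.closure_left hH).notMem_of_mem_left (closure_mono hk (hpW k))
  obtain ⟨k, hkH, hk⟩ := ((hy.frequently (hH.mem_nhds hyH)).and_eventually hp_notMem_H).exists
  exact hk hkH

/-- If `X` is a first-countable subspace of a countably compact Hausdorff
space, then `X` is regular. -/
theorem stmt1 {Y : Type*} [TopologicalSpace Y] [T2Space Y]
    (hcc : ∀ S : Set Y, S.Infinite → ∃ y : Y, AccPt y (𝓟 S))
    (s : Set Y) [FirstCountableTopology s] :
    RegularSpace s := by
  have : CountablyCompactSpace Y := ⟨isCountablyCompact_iff_infinite_subset_has_accPt.2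
    fun B _ hB => (hcc B hB).imp fun y hy => ⟨Set.mem_univ y, hy⟩⟩
  refine RegularSpace.of_exists_mem_nhds_isClosed_subset fun x U hU => ?_
  obtain ⟨V, hV⟩ := (𝓝 x).exists_antitone_basis
  obtain ⟨O, hO, hOU⟩ := (mem_nhds_subtype s x U).1 hU
  have hVY : Tendsto (fun n => closure (Subtype.val '' V n)) atTop (𝓝 (x : Y)).smallSets :=
    (continuous_subtype_val.continuousAt.tendsto.image_smallSets.comp
      hV.tendsto_smallSets).closure_smallSets
  obtain ⟨n, hn⟩ := (tendsto_smallSets_iff.1 hVY O hO).exists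
  refine ⟨closure (V n), mem_of_superset (hV.mem n) subset_closure, isClosed_closure, ?_⟩
  rw [Topology.IsEmbedding.subtypeVal.closure_eq_preimage_closure_image]
  exact (Set.preimage_mono hn).trans hOU
end

section
/- Every subspace X of a countably compact Hausdorff space Y is weakly ∞-regular: for every infinite closed subset F ⊆ X and every point x ∈ X \ F there exist disjoint open sets V, U ⊆ X such that x ∈ V and U ∩ F is infinite. -/
open Filter Topology

/-! Let `y` be an accumulation point in `Y` of the infinite set `F`. Since `F` is closed in `X`,
`y` is not `x`, so Hausdorff separation of `x` and `y` in `Y` gives the two open sets; every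
neighbourhood of `y` meets `F` in infinitely many points because `Y` is T₁. -/

theorem AccPt.inter_of_mem_nhds {Z : Type*} [TopologicalSpace Z] {y : Z} {S U : Set Z}
    (h : AccPt y (𝓟 S)) (hU : U ∈ 𝓝 y) : AccPt y (𝓟 (U ∩ S)) := by
  rw [accPt_iff_frequently] at h ⊢
  exact (h.and_eventually hU).mono fun z ⟨⟨hzy, hzS⟩, hzU⟩ => ⟨hzy, hzU, hzS⟩

theorem AccPt.infinite_inter_of_mem_nhds {Z : Type*} [TopologicalSpace Z] [T1Space Z] {y : Z}
    {S U : Set Z} (h : AccPt y (𝓟 S)) (hU : U ∈ 𝓝 y) : (U ∩ S).Infinite :=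
  Set.Infinite.of_accPt (h.inter_of_mem_nhds hU)

theorem AccPt.ne_of_isClosed_subtype {Z : Type*} [TopologicalSpace Z] {s : Set Z} {F : Set s}
    (hF : IsClosed F) {x : s} (hx : x ∉ F) {y : Z} (hy : AccPt y (𝓟 (Subtype.val '' F))) :
    y ≠ x := by
  rintro rfl
  exact hx (hF.closure_subset (closure_subtype.mpr (mem_closure_iff_clusterPt.mpr hy.clusterPt)))

theorem exists_open_separation_of_accPt_image {Z : Type*} [TopologicalSpace Z] [T2Space Z]
    {s : Set Z} {F : Set s} {x : s} {y : Z} (hy : AccPt y (𝓟 (Subtype.val '' F))) (hxy : y ≠ x) :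
    ∃ V U : Set s, IsOpen V ∧ IsOpen U ∧ x ∈ V ∧ (U ∩ F).Infinite ∧ Disjoint V U := by
  obtain ⟨Uy, Vx, hUy, hVx, hyUy, hxVx, hdisj⟩ := t2_separation hxy
  refine ⟨Subtype.val ⁻¹' Vx, Subtype.val ⁻¹' Uy, hVx.preimage continuous_subtype_val,
    hUy.preimage continuous_subtype_val, hxVx, ?_, hdisj.symm.preimage _⟩
  have hinf : (Uy ∩ Subtype.val '' F).Infinite := hy.infinite_inter_of_mem_nhds (hUy.mem_nhds hyUy)
  rw [Set.inter_comm, ← Set.image_inter_preimage] at hinf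
  rw [Set.inter_comm]
  exact hinf.of_image _

/-- Every subspace `X` of a countably compact Hausdorff space `Y` is weakly
∞-regular: for every infinite closed `F ⊆ X` and every `x ∈ X \ F` there are
disjoint open sets `V, U ⊆ X` with `x ∈ V` and `U ∩ F` infinite. -/
theorem stmt2 {Y : Type*} [TopologicalSpace Y] [T2Space Y]
    (hcc : ∀ S : Set Y, S.Infinite → ∃ y : Y, AccPt y (𝓟 S))
    (s : Set Y) :
    ∀ F : Set s, IsClosed F → F.Infinite → ∀ x : s, x ∉ F →
      ∃ V U : Set s, IsOpen V ∧ IsOpen U ∧ x ∈ V ∧ (U ∩ F).Infinite ∧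
        Disjoint V U := by
  intro F hF hFinf x hx
  obtain ⟨y, hy⟩ := hcc _ (hFinf.image Subtype.val_injective.injOn)
  exact exists_open_separation_of_accPt_image hy (hy.ne_of_isClosed_subtype hF hx)
end

section
/- If X is a subspace of a countably compact Hausdorff space Y, then every infinite subset I ⊆ X contains an infinite subset D ⊆ I that is strictly discrete in X, i.e., each point d ∈ D has an open neighborhood O_d in X such that the family (O_d)_{d ∈ D} is pairwise disjoint. -/
/-!
The points of `I` accumulate at some `y ∈ Y`. Recursively pick `dₙ ∈ I` inside a shrinking
neighbourhood `Vₙ` of `y`, separated from `y` by disjoint open sets `Uₙ ∋ dₙ` and `Vₙ₊₁ ∋ y`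
contained in `Vₙ`. Every later `Uₘ` lies in `Vₙ₊₁`, so the `Uₙ` are pairwise disjoint.
-/

open Filter Topology Set Function

theorem injective_of_mem_of_pairwise_disjoint {X ι : Type*} {d : ι → X} {U : ι → Set X}
    (hd : ∀ i, d i ∈ U i) (hdisj : Pairwise (Disjoint on U)) : Injective d := fun i j hij => by
  by_contra hne
  exact disjoint_left.mp (hdisj hne) (hd i) (hij ▸ hd j)

section

variable {X Y : Type*} [TopologicalSpace X] [TopologicalSpace Y]

def IsStrictlyDiscrete (D : Set X) : Prop :=
  ∃ O : X → Set X, (∀ d ∈ D, IsOpen (O d) ∧ d ∈ O d) ∧ D.PairwiseDisjoint O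

theorem IsStrictlyDiscrete.preimage {D : Set Y} (hD : IsStrictlyDiscrete D) {f : X → Y}
    (hf : Continuous f) (hinj : Injective f) : IsStrictlyDiscrete (f ⁻¹' D) := by
  obtain ⟨O, hO, hdisj⟩ := hD
  refine ⟨fun x => f ⁻¹' O (f x), fun x hx => ⟨(hO _ hx).1.preimage hf, (hO _ hx).2⟩, ?_⟩
  intro x hx x' hx' hne
  exact (hdisj hx hx' (hinj.ne hne)).preimage f

theorem isStrictlyDiscrete_range {ι : Type*} [Nonempty ι] {d : ι → X} {U : ι → Set X}
    (hU : ∀ i, IsOpen (U i)) (hd : ∀ i, d i ∈ U i) (hdisj : Pairwise (Disjoint on U)) :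
    IsStrictlyDiscrete (range d) := by
  have hinj := injective_of_mem_of_pairwise_disjoint hd hdisj
  refine ⟨fun x => U (invFun d x), ?_, ?_⟩
  · rintro _ ⟨i, rfl⟩
    simpa only [leftInverse_invFun hinj i] using ⟨hU i, hd i⟩
  · rintro _ ⟨i, rfl⟩ _ ⟨j, rfl⟩ hne
    simp only [onFun, leftInverse_invFun hinj i, leftInverse_invFun hinj j]
    exact hdisj fun hij => hne (congrArg d hij)

theorem AccPt.exists_isOpen_disjoint_nhds_subset [T2Space X] {y : X} {S : Set X}
    (hy : AccPt y (𝓟 S)) {V : Set X} (hV : V ∈ 𝓝 y) :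
    ∃ d ∈ S, ∃ U, IsOpen U ∧ d ∈ U ∧ U ⊆ V ∧ ∃ W ∈ 𝓝 y, W ⊆ V ∧ Disjoint U W := by
  obtain ⟨d, ⟨hdV, hdS⟩, hdy⟩ := accPt_iff_nhds.mp hy _ (interior_mem_nhds.mpr hV)
  obtain ⟨A, B, hA, hB, hdA, hyB, hAB⟩ := t2_separation hdy
  refine ⟨d, hdS, A ∩ interior V, hA.inter isOpen_interior, ⟨hdA, hdV⟩,
    inter_subset_right.trans interior_subset, B ∩ V, inter_mem (hB.mem_nhds hyB) hV,
    inter_subset_right, hAB.mono inter_subset_left inter_subset_left⟩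

theorem AccPt.exists_seq_pairwise_disjoint [T2Space X] {y : X} {S : Set X}
    (hy : AccPt y (𝓟 S)) :
    ∃ (d : ℕ → X) (U : ℕ → Set X),
      (∀ n, d n ∈ S ∧ IsOpen (U n) ∧ d n ∈ U n) ∧ Pairwise (Disjoint on U) := by
  have : Nonempty X := ⟨y⟩
  choose! d hdS U hUo hdU hUV W hW hWV hUW using
    fun V (hV : V ∈ 𝓝 y) => hy.exists_isOpen_disjoint_nhds_subset hV
  set V : ℕ → Set X := fun n => W^[n] univ
  have hVsucc : ∀ n, V (n + 1) = W (V n) := fun n => iterate_succ_apply' W n univ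
  have hV : ∀ n, V n ∈ 𝓝 y := fun n => by
    induction n with
    | zero => exact univ_mem
    | succ n ih => exact hVsucc n ▸ hW _ ih
  have hVanti : Antitone V :=
    antitone_nat_of_succ_le fun n => hVsucc n ▸ hWV _ (hV n)
  refine ⟨d ∘ V, U ∘ V, fun n => ⟨hdS _ (hV n), hUo _ (hV n), hdU _ (hV n)⟩, ?_⟩
  refine (pairwise_disjoint_on _).mpr fun n m hnm => ?_
  have hUm : U (V m) ⊆ W (V n) := hVsucc n ▸ (hUV _ (hV m)).trans (hVanti hnm)
  exact (hUW _ (hV n)).mono_right hUm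

theorem AccPt.exists_infinite_isStrictlyDiscrete [T2Space X] {y : X} {S : Set X}
    (hy : AccPt y (𝓟 S)) : ∃ D ⊆ S, D.Infinite ∧ IsStrictlyDiscrete D := by
  obtain ⟨d, U, hdU, hdisj⟩ := hy.exists_seq_pairwise_disjoint
  have hd : ∀ n, d n ∈ U n := fun n => (hdU n).2.2
  exact ⟨range d, range_subset_iff.mpr fun n => (hdU n).1,
    infinite_range_of_injective (injective_of_mem_of_pairwise_disjoint hd hdisj),
    isStrictlyDiscrete_range (fun n => (hdU n).2.1) hd hdisj⟩

end

/-- If `X` is a subspace of a countably compact Hausdorff space `Y`, then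
every infinite `I ⊆ X` contains an infinite subset `D` that is strictly
discrete in `X`: the points of `D` admit pairwise disjoint open
neighborhoods. -/
theorem stmt3 {Y : Type*} [TopologicalSpace Y] [T2Space Y]
    (hcc : ∀ S : Set Y, S.Infinite → ∃ y : Y, AccPt y (𝓟 S))
    (s : Set Y) :
    ∀ I : Set s, I.Infinite → ∃ D ⊆ I, D.Infinite ∧
      ∃ O : s → Set s, (∀ d ∈ D, IsOpen (O d) ∧ d ∈ O d) ∧
        D.PairwiseDisjoint O := by
  intro I hI
  obtain ⟨y, hy⟩ := hcc _ (hI.image Subtype.val_injective.injOn)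
  obtain ⟨D, hDI, hDinf, hD⟩ := hy.exists_infinite_isStrictlyDiscrete
  exact ⟨Subtype.val ⁻¹' D, fun x hx => Subtype.val_injective.mem_set_image.mp (hDI hx),
    hDinf.preimage (hDI.trans (image_subset_range _ _)),
    hD.preimage continuous_subtype_val Subtype.val_injective⟩
end

section
/- If X is a Lindelöf subspace of a countably compact Hausdorff space Y, then every infinite closed discrete subset I ⊆ X contains an infinite subset D ⊆ I that is strongly discrete in X: each d ∈ D has an open neighborhood O_d in X such that the family (O_d)_{d∈D} is pairwise disjoint and locally finite in X. -/
open Filter Topology Set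

/-- If `X` is a Lindelöf subspace of a countably compact Hausdorff space `Y`,
then every infinite closed discrete `I ⊆ X` contains an infinite subset `D`
that is strongly discrete in `X`: the points of `D` admit pairwise disjoint
open neighborhoods forming a locally finite family in `X`. -/
theorem stmt4 {Y : Type*} [TopologicalSpace Y] [T2Space Y]
    (hcc : ∀ S : Set Y, S.Infinite → ∃ y : Y, AccPt y (𝓟 S))
    (s : Set Y) [LindelofSpace s] :
    ∀ I : Set s, IsClosed I → (∀ x : s, ¬ AccPt x (𝓟 I)) → I.Infinite →
      ∃ D ⊆ I, D.Infinite ∧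
        ∃ O : s → Set s, (∀ d ∈ D, IsOpen (O d) ∧ d ∈ O d) ∧
          D.PairwiseDisjoint O ∧
          (∀ x : s, ∃ N ∈ 𝓝 x, {d ∈ D | (O d ∩ N).Nonempty}.Finite) := by
  intro I _hIcl hIdisc hIinf
  -- the image of I in Y
  set I' : Set Y := Subtype.val '' I with hI'
  have hI'inf : I'.Infinite := hIinf.image (Subtype.val_injective.injOn)
  obtain ⟨p, hp⟩ := hcc I' hI'inf
  rw [accPt_iff_nhds] at hp
  -- p is not in s
  have hps : p ∉ s := by
    intro hpmem
    apply hIdisc ⟨p, hpmem⟩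
    rw [accPt_iff_nhds]
    intro U hU
    rw [mem_nhds_subtype] at hU
    obtain ⟨V, hV, hVU⟩ := hU
    obtain ⟨y, ⟨hyV, hyI'⟩, hyp⟩ := hp V hV
    obtain ⟨w, hwI, rfl⟩ := hyI'
    exact ⟨w, ⟨hVU hyV, hwI⟩, fun h => hyp (by rw [h])⟩
  -- Hausdorff separation of each point of s from p
  have hsep : ∀ z : s, ∃ V W : Set Y, IsOpen V ∧ IsOpen W ∧ (z : Y) ∈ V ∧ p ∈ W ∧
      Disjoint V W := by
    intro z
    have : (z : Y) ≠ p := fun h => hps (h ▸ z.2)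
    obtain ⟨V, W, hV, hW, hzV, hpW, hVW⟩ := t2_separation this
    exact ⟨V, W, hV, hW, hzV, hpW, hVW⟩
  choose V W hVopen hWopen hzV hpW hVW using hsep
  -- Lindelöf: countable subcover of s by the V's
  have hcov : (univ : Set s) ⊆ ⋃ z : s, Subtype.val ⁻¹' (V z) := by
    intro z _
    exact mem_iUnion.2 ⟨z, hzV z⟩
  obtain ⟨t, htc, hts⟩ := isLindelof_univ.elim_countable_subcover
    (fun z : s => Subtype.val ⁻¹' (V z)) (fun z => (hVopen z).preimage continuous_subtype_val)
    hcov
  have hsne : Nonempty s := by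
    obtain ⟨x, hx⟩ := hIinf.nonempty
    exact ⟨x⟩
  have htne : t.Nonempty := by
    obtain ⟨x⟩ := hsne
    have := hts (mem_univ x)
    rw [mem_iUnion₂] at this
    obtain ⟨z, hz, _⟩ := this
    exact ⟨z, hz⟩
  obtain ⟨f, hf⟩ := htc.exists_eq_range htne
  -- Vn, Wn : countable families
  set Vn : ℕ → Set Y := fun n => V (f n) with hVn
  set Wn : ℕ → Set Y := fun n => W (f n) with hWn
  have hcov' : ∀ z : s, ∃ n, (z : Y) ∈ Vn n := by
    intro z
    have := hts (mem_univ z)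
    rw [mem_iUnion₂] at this
    obtain ⟨w, hw, hzw⟩ := this
    rw [hf] at hw
    obtain ⟨n, rfl⟩ := hw
    exact ⟨n, hzw⟩
  -- key recursive step
  have key : ∀ (n : ℕ) (R : Set Y), IsOpen R → p ∈ R →
      ∃ d Q R' : _, d ∈ I' ∧ d ∈ Q ∧ Q ⊆ R ∧ IsOpen Q ∧ IsOpen R' ∧ p ∈ R' ∧
        R' ⊆ R ∧ R' ⊆ Wn (n + 1) ∧ Disjoint Q R' := by
    intro n R hRo hpR
    obtain ⟨d, ⟨hdR, hdI⟩, hdp⟩ := hp R (hRo.mem_nhds hpR)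
    obtain ⟨Q0, P0, hQ0, hP0, hdQ0, hpP0, hQP0⟩ := t2_separation hdp
    refine ⟨d, Q0 ∩ R, R ∩ P0 ∩ Wn (n + 1), hdI, ⟨hdQ0, hdR⟩, inter_subset_right,
      hQ0.inter hRo, (hRo.inter hP0).inter (hWopen _), ⟨⟨hpR, hpP0⟩, hpW _⟩,
      fun x hx => hx.1.1, fun x hx => hx.2, ?_⟩
    exact (hQP0.mono inter_subset_left (fun x hx => hx.1.2)).symm.symm
  choose! dd QQ RR hdI' hdQ hQR hQo hRo' hpR' hRsub hRW hQRdisj using key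
  -- the recursively defined sequence of R's
  let Rseq : ℕ → {R : Set Y // IsOpen R ∧ p ∈ R} := fun n =>
    Nat.rec ⟨Wn 0, hWopen _, hpW _⟩
      (fun n prev => ⟨RR n prev.1, hRo' n prev.1 prev.2.1 prev.2.2,
        hpR' n prev.1 prev.2.1 prev.2.2⟩) n
  set Rs : ℕ → Set Y := fun n => (Rseq n).1 with hRs
  have hRsO : ∀ n, IsOpen (Rs n) := fun n => (Rseq n).2.1
  have hRsp : ∀ n, p ∈ Rs n := fun n => (Rseq n).2.2

  set d : ℕ → Y := fun n => dd n (Rs n) (hRsO n) (hRsp n) with hd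
  set O : ℕ → Set Y := fun n => QQ n (Rs n) with hO
  have hdI : ∀ n, d n ∈ I' := fun n => hdI' n (Rs n) (hRsO n) (hRsp n)
  have hdO : ∀ n, d n ∈ O n := fun n => hdQ n (Rs n) (hRsO n) (hRsp n)
  have hOR : ∀ n, O n ⊆ Rs n := fun n => hQR n (Rs n) (hRsO n) (hRsp n)
  have hOo : ∀ n, IsOpen (O n) := fun n => hQo n (Rs n) (hRsO n) (hRsp n)
  have hRstep : ∀ n, Rs (n + 1) = RR n (Rs n) := fun n => rfl
  have hRmono : ∀ n, Rs (n + 1) ⊆ Rs n := fun n => by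
    rw [hRstep]; exact hRsub n (Rs n) (hRsO n) (hRsp n)
  have hRWn : ∀ n, Rs n ⊆ Wn n := by
    intro n
    cases n with
    | zero => exact subset_rfl
    | succ m => rw [hRstep]; exact hRW m (Rs m) (hRsO m) (hRsp m)
  have hRle : ∀ m n, n ≤ m → Rs m ⊆ Rs n := by
    intro m n h
    induction m with
    | zero => rw [Nat.le_zero.mp h]
    | succ k ih =>
      rcases Nat.lt_or_ge n (k+1) with h' | h'
      · exact (hRmono k).trans (ih (Nat.lt_succ_iff.mp h'))
      · rw [Nat.le_antisymm h h']
  have hOdisj : ∀ {n m : ℕ}, n < m → Disjoint (O n) (O m) := by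
    intro n m hnm
    have h1 : O m ⊆ Rs (n + 1) := (hOR m).trans (hRle m (n+1) hnm)
    have h2 : Disjoint (O n) (Rs (n+1)) := by
      rw [hRstep]; exact hQRdisj n (Rs n) (hRsO n) (hRsp n)
    exact h2.mono_right h1
  -- injectivity of d
  have hdinj : Function.Injective d := by
    intro n m h
    by_contra hne
    rcases Nat.lt_or_ge n m with h' | h'
    · exact (hOdisj h').ne_of_mem (hdO n) (hdO m) h
    · exact (hOdisj (lt_of_le_of_ne h' (Ne.symm hne))).ne_of_mem (hdO m) (hdO n) h.symm
  -- the points as elements of s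
  have hds : ∀ n, d n ∈ s := fun n => by
    obtain ⟨w, _, hw⟩ := hdI n
    rw [← hw]; exact w.2
  set e : ℕ → s := fun n => ⟨d n, hds n⟩ with he
  have heinj : Function.Injective e := fun n m h =>
    hdinj (congrArg Subtype.val h)
  have heI : ∀ n, e n ∈ I := by
    intro n
    obtain ⟨w, hwI, hw⟩ := hdI n
    have : w = e n := Subtype.ext hw
    rwa [← this]
  refine ⟨Set.range e, ?_, Set.infinite_range_of_injective heinj, ?_⟩
  · rintro x ⟨n, rfl⟩; exact heI n
  · classical
    set Ofun : s → Set s :=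
      fun x => if h : x ∈ Set.range e then Subtype.val ⁻¹' (O h.choose) else ∅ with hOfun
    have hOe : ∀ n, Ofun (e n) = Subtype.val ⁻¹' (O n) := by
      intro n
      have hmem : e n ∈ Set.range e := ⟨n, rfl⟩
      simp only [hOfun]
      rw [dif_pos hmem, heinj hmem.choose_spec]
    refine ⟨Ofun, ?_, ?_, ?_⟩
    · rintro x ⟨n, rfl⟩
      rw [hOe n]
      exact ⟨(hOo n).preimage continuous_subtype_val, hdO n⟩
    · rintro x ⟨n, rfl⟩ y ⟨m, rfl⟩ hxy
      simp only [Function.onFun]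
      rw [hOe n, hOe m]
      have hnm : n ≠ m := fun h => hxy (by rw [h])
      rcases Nat.lt_or_ge n m with h' | h'
      · exact (hOdisj h').preimage _
      · exact ((hOdisj (lt_of_le_of_ne h' (Ne.symm hnm))).symm).preimage _
    · intro x
      obtain ⟨n, hxn⟩ := hcov' x
      refine ⟨Subtype.val ⁻¹' (Vn n),
        ((hVopen (f n)).preimage continuous_subtype_val).mem_nhds hxn, ?_⟩
      have : {d_ ∈ Set.range e | (Ofun d_ ∩ Subtype.val ⁻¹' (Vn n)).Nonempty}
          ⊆ e '' {m | m < n} := by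
        rintro x' ⟨⟨m, rfl⟩, hne⟩
        refine ⟨m, ?_, rfl⟩
        by_contra hmn
        simp only [Set.mem_setOf_eq, not_lt] at hmn
        rw [hOe m] at hne
        obtain ⟨z, hz1, hz2⟩ := hne
        have hOWn : O m ⊆ Wn n := (hOR m).trans ((hRle m n hmn).trans (hRWn n))
        exact (hVW (f n)).ne_of_mem hz2 (hOWn hz1) rfl
      exact Set.Finite.subset ((Set.finite_Iio n).image e) this
end

section
/- Every countable closed discrete subset D of an ömega-regular T1 space X (meaning: for every closed discrete set F ⊆ X and point x ∉ F there are disjoint open sets separating x from F) is strictly discrete in X: there exist pairwise disjoint open sets O_d ∋ d for d ∈ D. -/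
open Filter Topology

/-- Every countable closed discrete subset `D` of a ẅ-regular T1 space `X`
(for every closed discrete `F` and `x ∉ F` there are disjoint open sets
separating `x` from `F`) is strictly discrete in `X`. -/
theorem stmt5 {X : Type*} [TopologicalSpace X] [T1Space X]
    (hreg : ∀ F : Set X, IsClosed F → (∀ x : X, ¬ AccPt x (𝓟 F)) →
      ∀ x ∉ F, ∃ U V : Set X, IsOpen U ∧ IsOpen V ∧ F ⊆ U ∧ x ∈ V ∧
        Disjoint U V)
    (D : Set X) (hDc : D.Countable) (hDcl : IsClosed D)
    (hDd : ∀ x : X, ¬ AccPt x (𝓟 D)) :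
    ∃ O : X → Set X, (∀ d ∈ D, IsOpen (O d) ∧ d ∈ O d) ∧
      D.PairwiseDisjoint O := by
  rcases D.eq_empty_or_nonempty with hD | hD
  · refine ⟨fun _ => ∅, ?_, ?_⟩ <;> simp [hD]
  -- For each d, D \ {d} is closed
  have hclosed : ∀ d : X, IsClosed (D \ {d}) := by
    intro d
    rw [← isOpen_compl_iff]
    rw [isOpen_iff_mem_nhds]
    intro x hx
    by_cases hxD : x ∈ D
    · have hxd : x = d := by
        by_contra h
        exact hx ⟨hxD, h⟩
      subst hxd
      have := hDd x
      rw [accPt_iff_nhds] at this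
      push_neg at this
      obtain ⟨W, hW, hW2⟩ := this
      filter_upwards [hW] with y hy
      intro ⟨hy1, hy2⟩
      exact hy2 (hW2 y ⟨hy, hy1⟩)
    · filter_upwards [hDcl.isOpen_compl.mem_nhds hxD] with y hy
      exact fun h => hy h.1
  have hdisc : ∀ d : X, ∀ x : X, ¬ AccPt x (𝓟 (D \ {d})) := fun d x h =>
    hDd x (h.mono (principal_mono.mpr Set.diff_subset))
  have hsep : ∀ d : X, ∃ U V : Set X, IsOpen U ∧ IsOpen V ∧
      (d ∈ D → D \ {d} ⊆ U) ∧ d ∈ V ∧ Disjoint U V := by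
    intro d
    by_cases hd : d ∈ D
    · obtain ⟨U, V, hU, hV, h1, h2, h3⟩ :=
        hreg (D \ {d}) (hclosed d) (hdisc d) d (fun h => h.2 rfl)
      exact ⟨U, V, hU, hV, fun _ => h1, h2, h3⟩
    · exact ⟨∅, Set.univ, isOpen_empty, isOpen_univ, fun h => absurd h hd,
        Set.mem_univ d, disjoint_bot_left⟩
  choose U V hU hV hDU hdV hUV using hsep
  obtain ⟨f, hf⟩ := Set.Countable.exists_eq_range hDc hD
  set idx : X → ℕ := fun d => sInf {n | f n = d} with hidx
  have hfidx : ∀ d ∈ D, f (idx d) = d := by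
    intro d hd
    have : ∃ n, f n = d := by rw [hf] at hd; exact hd
    exact Nat.sInf_mem this
  have hlt : ∀ d ∈ D, ∀ m, m < idx d → f m ≠ d := by
    intro d hd m hm
    exact Nat.notMem_of_lt_sInf hm
  refine ⟨fun d => V d ∩ ⋂ m ∈ Finset.range (idx d), U (f m), ?_, ?_⟩
  · intro d hd
    constructor
    · exact (hV d).inter (isOpen_biInter_finset fun m _ => hU (f m))
    · refine ⟨hdV d, ?_⟩
      simp only [Set.mem_iInter, Finset.mem_range]
      intro m hm
      have hfmD : f m ∈ D := by rw [hf]; exact ⟨m, rfl⟩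
      exact hDU (f m) hfmD ⟨hd, fun h => hlt d hd m hm (by simpa using h.symm)⟩
  · intro d hd e he hde
    have hne : idx d ≠ idx e := fun h => hde (by
      rw [← hfidx d hd, ← hfidx e he, h])
    rcases hne.lt_or_gt with h | h
    · -- idx d < idx e : O e ⊆ U (f (idx d)) = U d, O d ⊆ V d
      have h1 : V e ∩ ⋂ m ∈ Finset.range (idx e), U (f m) ⊆ U d := by
        intro x hx
        have := hx.2
        simp only [Set.mem_iInter, Finset.mem_range] at this
        have := this (idx d) h
        rwa [hfidx d hd] at this
      exact Disjoint.mono Set.inter_subset_left h1 (hUV d).symm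
    · have h1 : V d ∩ ⋂ m ∈ Finset.range (idx d), U (f m) ⊆ U e := by
        intro x hx
        have := hx.2
        simp only [Set.mem_iInter, Finset.mem_range] at this
        have := this (idx e) h
        rwa [hfidx e he] at this
      exact Disjoint.mono h1 Set.inter_subset_left (hUV e)
end

section
/- If X is a Lindelöf ẅ-regular T1 space, then every countable closed discrete subset D ⊆ X is strongly discrete: there exist open sets O_d ∋ d (d ∈ D) that are pairwise disjoint and form a locally finite family in X. -/
open Filter Topology

/-!
Apply ẅ-regularity to the closed discrete sets `D \ {x}` to get, for every point `x`, an open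
`V x ∋ x` and an open `U x ⊇ D \ {x}` disjoint from it. By Lindelöfness countably many `V s`
cover `X`; enumerate these `s` together with `D` as `s₀, s₁, …` and put
`O d = V d ∩ ⋂ {U sᵢ | i < index of d}`. Two points of `D` are separated by the later one's
`O` lying in the earlier one's `U`, and `V sₙ` meets only `O d` with `d` among `s₀, …, sₙ`.
-/

theorem isClosed_of_forall_not_accPt {X : Type*} [TopologicalSpace X] {E : Set X}
    (h : ∀ x, ¬ AccPt x (𝓟 E)) : IsClosed E :=
  (isClosed_iff_derivedSet_subset E).2 fun x hx => (h x hx).elim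

theorem Set.InjOn.finite_setOf_lt {X : Type*} {S : Set X} {f : X → ℕ} (hf : S.InjOn f)
    (n : ℕ) : {s ∈ S | f s < n}.Finite :=
  Set.Finite.of_finite_image ((Set.finite_Iio n).subset (by rintro _ ⟨s, ⟨-, hs⟩, rfl⟩; exact hs))
    (hf.mono fun _ hs => hs.1)

section StaggeredNbhd

variable {X : Type*}

def staggeredNbhd (S : Set X) (f : X → ℕ) (U V : X → Set X) (d : X) : Set X :=
  V d ∩ ⋂ s ∈ {s ∈ S | f s < f d}, U s

variable {D S : Set X} {f : X → ℕ} {U V : X → Set X} {d s : X}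

theorem staggeredNbhd_subset_right : staggeredNbhd S f U V d ⊆ V d :=
  Set.inter_subset_left

theorem staggeredNbhd_subset_of_lt (hs : s ∈ S) (hlt : f s < f d) :
    staggeredNbhd S f U V d ⊆ U s :=
  fun _ hx => Set.mem_iInter₂.1 hx.2 s ⟨hs, hlt⟩

theorem isOpen_staggeredNbhd [TopologicalSpace X] (hf : S.InjOn f) (hU : ∀ s, IsOpen (U s)) (hV : IsOpen (V d)) :
    IsOpen (staggeredNbhd S f U V d) :=
  hV.inter ((hf.finite_setOf_lt (f d)).isOpen_biInter fun s _ => hU s)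

theorem mem_staggeredNbhd (hUD : ∀ s, D \ {s} ⊆ U s) (hd : d ∈ D) (hdV : d ∈ V d) :
    d ∈ staggeredNbhd S f U V d := by
  refine ⟨hdV, Set.mem_iInter₂.2 fun s hs => hUD s ⟨hd, ?_⟩⟩
  rintro rfl
  exact hs.2.false

theorem disjoint_staggeredNbhd_of_lt (hUV : ∀ s, Disjoint (U s) (V s)) (hs : s ∈ S)
    (hlt : f s < f d) : Disjoint (staggeredNbhd S f U V d) (V s) :=
  (hUV s).mono_left (staggeredNbhd_subset_of_lt hs hlt)

theorem pairwiseDisjoint_staggeredNbhd (hDS : D ⊆ S) (hf : S.InjOn f)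
    (hUV : ∀ s, Disjoint (U s) (V s)) : D.PairwiseDisjoint (staggeredNbhd S f U V) := by
  intro d hd d' hd' hne
  rcases lt_trichotomy (f d) (f d') with hlt | heq | hgt
  · exact ((disjoint_staggeredNbhd_of_lt hUV (hDS hd) hlt).mono_right
      staggeredNbhd_subset_right).symm
  · exact (hne (hf (hDS hd) (hDS hd') heq)).elim
  · exact (disjoint_staggeredNbhd_of_lt hUV (hDS hd') hgt).mono_right staggeredNbhd_subset_right

theorem finite_setOf_staggeredNbhd_inter_nonempty (hDS : D ⊆ S) (hf : S.InjOn f)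
    (hUV : ∀ s, Disjoint (U s) (V s)) (hs : s ∈ S) :
    {d ∈ D | (staggeredNbhd S f U V d ∩ V s).Nonempty}.Finite := by
  refine (hf.finite_setOf_lt (f s + 1)).subset fun d ⟨hd, hne⟩ => ⟨hDS hd, ?_⟩
  by_contra! hge
  exact Set.not_nonempty_iff_eq_empty.2
    (disjoint_staggeredNbhd_of_lt hUV hs (by omega)).inter_eq hne

end StaggeredNbhd

theorem stmt6_general {X : Type*} [TopologicalSpace X] [LindelofSpace X]
    (hreg : ∀ F : Set X, IsClosed F → (∀ x : X, ¬ AccPt x (𝓟 F)) →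
      ∀ x ∉ F, ∃ U V : Set X, IsOpen U ∧ IsOpen V ∧ F ⊆ U ∧ x ∈ V ∧
        Disjoint U V)
    (D : Set X) (hDc : D.Countable)
    (hDd : ∀ x : X, ¬ AccPt x (𝓟 D)) :
    ∃ O : X → Set X, (∀ d ∈ D, IsOpen (O d) ∧ d ∈ O d) ∧
      D.PairwiseDisjoint O ∧
      (∀ x : X, ∃ N ∈ 𝓝 x, {d ∈ D | (O d ∩ N).Nonempty}.Finite) := by
  have hsep (x : X) : ∃ U V : Set X, IsOpen U ∧ IsOpen V ∧ D \ {x} ⊆ U ∧ x ∈ V ∧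
      Disjoint U V := by
    have hdiscrete (y : X) : ¬ AccPt y (𝓟 (D \ {x})) :=
      fun hy => hDd y (hy.mono (principal_mono.2 Set.sdiff_subset))
    exact hreg _ (isClosed_of_forall_not_accPt hdiscrete) hdiscrete x (by simp)
  choose U V hU hV hUD hxV hUV using hsep
  obtain ⟨T, hTc, hTcover⟩ :=
    LindelofSpace.elim_nhds_subcover V fun x => (hV x).mem_nhds (hxV x)
  obtain ⟨f, hf⟩ := Set.countable_iff_exists_injOn.1 (hDc.union hTc)
  refine ⟨staggeredNbhd (D ∪ T) f U V,
    fun d hd => ⟨isOpen_staggeredNbhd hf hU (hV d), mem_staggeredNbhd hUD hd (hxV d)⟩,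
    pairwiseDisjoint_staggeredNbhd Set.subset_union_left hf hUV, fun x => ?_⟩
  obtain ⟨s, hs, hxs⟩ := Set.mem_iUnion₂.1 (hTcover.symm ▸ Set.mem_univ x)
  exact ⟨V s, (hV s).mem_nhds hxs,
    finite_setOf_staggeredNbhd_inter_nonempty Set.subset_union_left hf hUV (Or.inr hs)⟩

/-- In a Lindelöf ẅ-regular T1 space `X`, every countable closed discrete
subset `D` is strongly discrete: the points of `D` admit pairwise disjoint
open neighborhoods forming a locally finite family in `X`. -/
theorem stmt6 {X : Type*} [TopologicalSpace X] [T1Space X] [LindelofSpace X]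
    (hreg : ∀ F : Set X, IsClosed F → (∀ x : X, ¬ AccPt x (𝓟 F)) →
      ∀ x ∉ F, ∃ U V : Set X, IsOpen U ∧ IsOpen V ∧ F ⊆ U ∧ x ∈ V ∧
        Disjoint U V)
    (D : Set X) (hDc : D.Countable) (hDcl : IsClosed D)
    (hDd : ∀ x : X, ¬ AccPt x (𝓟 D)) :
    ∃ O : X → Set X, (∀ d ∈ D, IsOpen (O d) ∧ d ∈ O d) ∧
      D.PairwiseDisjoint O ∧
      (∀ x : X, ∃ N ∈ 𝓝 x, {d ∈ D | (O d ∩ N).Nonempty}.Finite) :=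
  stmt6_general hreg D hDc hDd
end

section
/- Let X be a first-countable Hausdorff space with more than one point that is superconnected, meaning that for any finitely many nonempty open sets U_1, …, U_n the intersection of their closures is nonempty. Then X contains an infinite set I such that no infinite subset D ⊆ I is strictly discrete in X. -/
open Filter Topology

/-- A first-countable superconnected Hausdorff space with more than one point
contains an infinite set `I` such that no infinite `D ⊆ I` is strictly
discrete. -/
theorem stmt8 {X : Type*} [TopologicalSpace X] [T2Space X]
    [FirstCountableTopology X] [Nontrivial X]
    (hsc : ∀ (n : ℕ) (U : Fin n → Set X),
      (∀ i, IsOpen (U i) ∧ (U i).Nonempty) → (⋂ i, closure (U i)).Nonempty) :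
    ∃ I : Set X, I.Infinite ∧ ∀ D ⊆ I, D.Infinite →
      ¬ ∃ O : X → Set X, (∀ d ∈ D, IsOpen (O d) ∧ d ∈ O d) ∧
        D.PairwiseDisjoint O := by
  classical
  -- antitone open neighborhood bases
  choose s hs using fun x : X => (𝓝 x).exists_antitone_basis
  set B : X → ℕ → Set X := fun x n => interior (s x n) with hB
  have hBopen : ∀ x n, IsOpen (B x n) := fun x n => isOpen_interior
  have hBmem : ∀ x n, x ∈ B x n :=
    fun x n => mem_interior_iff_mem_nhds.mpr ((hs x).toHasBasis.mem_of_mem trivial)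
  have hBanti : ∀ x, Antitone (B x) := fun x a b hab =>
    interior_mono ((hs x).antitone hab)
  have hBbasis : ∀ x, ∀ V ∈ 𝓝 x, ∃ N, B x N ⊆ V := by
    intro x V hV
    obtain ⟨N, -, hN⟩ := (hs x).toHasBasis.mem_iff.mp hV
    exact ⟨N, interior_subset.trans hN⟩
  -- separating open sets
  have hsep : ∀ x : X, ∃ U : Set X, IsOpen U ∧ U.Nonempty ∧ x ∉ closure U := by
    intro x
    obtain ⟨y, hy⟩ := exists_ne x
    obtain ⟨u, v, hu, hv, hyu, hxv, huv⟩ := t2_separation hy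
    refine ⟨u, hu, ⟨y, hyu⟩, fun hx => ?_⟩
    obtain ⟨z, hz1, hz2⟩ := (mem_closure_iff.mp hx) v hv hxv
    exact Set.disjoint_left.mp huv.symm hz1 hz2
  choose U hUopen hUne hUcl using hsep
  -- finset version of superconnectedness
  have hsc' : ∀ t : Finset (Set X), (∀ V ∈ t, IsOpen V ∧ V.Nonempty) →
      ∃ z : X, ∀ V ∈ t, z ∈ closure V := by
    intro t ht
    obtain ⟨z, hz⟩ := hsc t.card (fun i => (t.equivFin.symm i : Set X))
      (fun i => ht _ (t.equivFin.symm i).2)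
    refine ⟨z, fun V hV => ?_⟩
    have := Set.mem_iInter.mp hz (t.equivFin ⟨V, hV⟩)
    simpa using this
  -- build the sequence
  set r : X × ℕ → X × ℕ → Prop :=
    fun p q => p.1 ≠ q.1 ∧ p.2 < q.2 ∧ q.1 ∈ closure (B p.1 q.2) with hr
  have step : ∀ t : Finset (X × ℕ), (∀ p ∈ t, True) →
      ∃ q : X × ℕ, True ∧ ∀ p ∈ t, r p q := by
    intro t _
    set j : ℕ := (t.sup fun p => p.2) + 1 with hj
    set F : Finset (Set X) :=
      t.image (fun p => B p.1 j) ∪ t.image (fun p => U p.1) with hF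
    have hFprop : ∀ V ∈ F, IsOpen V ∧ V.Nonempty := by
      intro V hV
      rcases Finset.mem_union.mp hV with h | h
      · obtain ⟨p, -, rfl⟩ := Finset.mem_image.mp h
        exact ⟨hBopen _ _, ⟨p.1, hBmem _ _⟩⟩
      · obtain ⟨p, -, rfl⟩ := Finset.mem_image.mp h
        exact ⟨hUopen _, hUne _⟩
    obtain ⟨z, hz⟩ := hsc' F hFprop
    refine ⟨(z, j), trivial, fun p hp => ?_⟩
    have h1 : z ∈ closure (B p.1 j) :=
      hz _ (Finset.mem_union_left _ (Finset.mem_image_of_mem _ hp))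
    have h2 : z ∈ closure (U p.1) :=
      hz _ (Finset.mem_union_right _ (Finset.mem_image_of_mem _ hp))
    refine ⟨fun he => hUcl p.1 (he ▸ h2), ?_, h1⟩
    exact Nat.lt_succ_of_le (Finset.le_sup (f := fun p : X × ℕ => p.2) hp)
  obtain ⟨f, -, hf⟩ := exists_seq_of_forall_finset_exists (fun _ => True) r step
  set x : ℕ → X := fun n => (f n).1 with hx
  have hxinj : Function.Injective x := by
    intro m n hmn
    by_contra hne
    rcases lt_or_gt_of_ne hne with h | h
    · exact (hf m n h).1 hmn
    · exact (hf n m h).1 hmn.symm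
  have hJ : StrictMono (fun n => (f n).2) := fun m n h => (hf m n h).2.1
  refine ⟨Set.range x, Set.infinite_range_of_injective hxinj, ?_⟩
  rintro D hD hDinf ⟨O, hO, hdisj⟩
  set S : Set ℕ := {n | x n ∈ D} with hS
  have hSinf : S.Infinite := by
    intro hfin
    apply hDinf
    refine (hfin.image x).subset ?_
    intro d hd
    obtain ⟨n, rfl⟩ := hD hd
    exact ⟨n, hd, rfl⟩
  obtain ⟨a, ha⟩ := hSinf.nonempty
  have hd0 := hO (x a) ha
  obtain ⟨N, hN⟩ := hBbasis (x a) (O (x a)) (hd0.1.mem_nhds hd0.2)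
  obtain ⟨n, hn, hgt⟩ := hSinf.exists_gt (max a N)
  have han : a < n := lt_of_le_of_lt (le_max_left _ _) hgt
  have hNn : N ≤ (f n).2 := le_trans (le_of_lt (lt_of_le_of_lt (le_max_right _ _) hgt)) hJ.le_apply
  have hcl : x n ∈ closure (O (x a)) := by
    have h1 : x n ∈ closure (B (x a) (f n).2) := (hf a n han).2.2
    exact closure_mono (le_trans (hBanti (x a) hNn) hN) h1
  have hd1 := hO (x n) hn
  obtain ⟨y, hy1, hy2⟩ := (mem_closure_iff.mp hcl) (O (x n)) hd1.1 hd1.2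
  have hne : x a ≠ x n := fun h => Nat.lt_irrefl a (hxinj h ▸ han)
  exact Set.disjoint_left.mp (hdisj ha hn hne) hy2 hy1
end

section
/- If X is a subspace of a functionally Hausdorff countably compact space Y, then no infinite closed discrete subset D of X is contained in a functionally compact subset of X. -/
open Filter Topology

/-- A subset of a topological space is functionally open if it is the
preimage of an open subset of `ℝ` under a continuous real-valued function. -/
def FunctionallyOpen {X : Type*} [TopologicalSpace X] (U : Set X) : Prop :=
  ∃ f : X → ℝ, Continuous f ∧ ∃ V : Set ℝ, IsOpen V ∧ U = f ⁻¹' V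

/-- A subset `K` is functionally compact if every cover of `K` by
functionally open sets has a finite subcover. -/
def FunctionallyCompact {X : Type*} [TopologicalSpace X] (K : Set X) : Prop :=
  ∀ 𝒰 : Set (Set X), (∀ U ∈ 𝒰, FunctionallyOpen U) → K ⊆ ⋃₀ 𝒰 →
    ∃ 𝒱 ⊆ 𝒰, 𝒱.Finite ∧ K ⊆ ⋃₀ 𝒱

/-- If `X` is a subspace of a functionally Hausdorff countably compact space
`Y`, then no infinite closed discrete subset `D` of `X` is contained in a
functionally compact subset of `X`. -/
theorem stmt9 {Y : Type*} [TopologicalSpace Y]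
    (hcc : ∀ S : Set Y, S.Infinite → ∃ y : Y, AccPt y (𝓟 S))
    (hfH : ∀ y y' : Y, y ≠ y' → ∃ f : Y → ℝ, Continuous f ∧
      Set.MapsTo f Set.univ (Set.Icc 0 1) ∧ f y = 0 ∧ f y' = 1)
    (s : Set Y) (D : Set s) (hD : D.Infinite) (hDcl : IsClosed D)
    (hDd : ∀ x : s, ¬ AccPt x (𝓟 D)) :
    ¬ ∃ K : Set s, FunctionallyCompact K ∧ D ⊆ K := by
  rintro ⟨K, hK, hDK⟩
  have hinj : Function.Injective (Subtype.val : s → Y) := Subtype.val_injective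
  have hD' : (Subtype.val '' D : Set Y).Infinite := hD.image hinj.injOn
  obtain ⟨y, hy⟩ := hcc _ hD'
  rw [accPt_iff_nhds] at hy
  by_cases hys : y ∈ s
  · apply hDd ⟨y, hys⟩
    rw [accPt_iff_nhds]
    intro U hU
    rw [mem_nhds_subtype] at hU
    obtain ⟨V, hV, hVU⟩ := hU
    obtain ⟨z, ⟨hzV, hzD⟩, hzy⟩ := hy V hV
    obtain ⟨d, hdD, rfl⟩ := hzD
    exact ⟨d, ⟨hVU hzV, hdD⟩, fun h => hzy (by rw [h])⟩
  · set 𝒰 : Set (Set s) := {U | ∃ g : Y → ℝ, Continuous g ∧ g y = 0 ∧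
      U = (fun z : s => g z.1) ⁻¹' Set.Ioi (1/2 : ℝ)} with h𝒰
    have hFO : ∀ U ∈ 𝒰, FunctionallyOpen U := by
      rintro U ⟨g, hgc, hg0, rfl⟩
      exact ⟨fun z : s => g z.1, hgc.comp continuous_subtype_val,
        Set.Ioi (1/2 : ℝ), isOpen_Ioi, rfl⟩
    have hcov : K ⊆ ⋃₀ 𝒰 := by
      intro x hx
      have hne : y ≠ (x : Y) := fun h => hys (h ▸ x.2)
      obtain ⟨f, hfc, _, hf0, hf1⟩ := hfH y x hne
      refine ⟨(fun z : s => f z.1) ⁻¹' Set.Ioi (1/2 : ℝ), ⟨f, hfc, hf0, rfl⟩, ?_⟩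
      simp only [Set.mem_preimage, Set.mem_Ioi, hf1]
      norm_num
    obtain ⟨𝒱, h𝒱𝒰, h𝒱fin, hK𝒱⟩ := hK 𝒰 hFO hcov
    have hex : ∀ V ∈ 𝒱, ∃ g : Y → ℝ, Continuous g ∧ g y = 0 ∧
        V = (fun z : s => g z.1) ⁻¹' Set.Ioi (1/2 : ℝ) := fun V hV => h𝒱𝒰 hV
    choose! g hgc hg0 hgV using hex
    set W : Set Y := ⋂ V ∈ 𝒱, (g V) ⁻¹' Set.Iio (1/2 : ℝ) with hW
    have hWopen : IsOpen W := h𝒱fin.isOpen_biInter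
      (fun V hV => (isOpen_Iio).preimage (hgc V hV))
    have hyW : y ∈ W := by
      refine Set.mem_iInter₂.mpr fun V hV => ?_
      simp [hg0 V hV]
    obtain ⟨z, ⟨hzW, hzD⟩, _⟩ := hy W (hWopen.mem_nhds hyW)
    obtain ⟨d, hdD, rfl⟩ := hzD
    obtain ⟨V, hV𝒱, hdV⟩ := hK𝒱 (hDK hdD)
    have h1 : (1/2 : ℝ) < g V d.1 := by
      have := hdV; rw [hgV V hV𝒱] at this; exact this
    have h2 : g V d.1 < 1/2 := Set.mem_iInter₂.mp hzW V hV𝒱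
    linarith
end

section
/- There exists an almost disjoint dominating family D ⊆ ω^ω of cardinality 𝔡 (the dominating number): D is dominating (for every x ∈ ω^ω there is y ∈ D with x(n) ≤ y(n) for all but finitely many n) and almost disjoint (distinct y, y' ∈ D, viewed as graphs in ω × ω, have finite intersection). -/
open Filter

/-- A family `D ⊆ ω^ω` is dominating if every function is eventually
bounded above by a member of `D`. -/
def IsDominatingFamily (D : Set (ℕ → ℕ)) : Prop :=
  ∀ x : ℕ → ℕ, ∃ y ∈ D, ∀ᶠ n in atTop, x n ≤ y n

/-- Code a function by pairing its value with a code of its prefix. -/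
def adCode (y : ℕ → ℕ) (n : ℕ) : ℕ :=
  Nat.pair (y n) (Encodable.encode (List.ofFn fun i : Fin (n + 1) => y i))

lemma adCode_le (y : ℕ → ℕ) (n : ℕ) : y n ≤ adCode y n :=
  Nat.left_le_pair _ _

lemma adCode_ne {y y' : ℕ → ℕ} {k : ℕ} (h : y k ≠ y' k) {n : ℕ} (hn : k ≤ n) :
    adCode y n ≠ adCode y' n := by
  intro he
  have h2 := Nat.pair_eq_pair.mp he
  have hl := Encodable.encode_injective h2.2
  have : y k = y' k := by
    have h1 : (List.ofFn fun i : Fin (n + 1) => y i)[k]'(by simpa using Nat.lt_succ_of_le hn)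
        = (List.ofFn fun i : Fin (n + 1) => y' i)[k]'(by simpa using Nat.lt_succ_of_le hn) := by
      simp_rw [hl]
    simp only [List.getElem_ofFn] at h1
    exact h1
  exact h this

/-- There exists an almost disjoint dominating family `D ⊆ ω^ω` of
cardinality `𝔡`, the dominating number. -/
theorem stmt10 :
    ∃ D : Set (ℕ → ℕ), IsDominatingFamily D ∧
      (D.Pairwise fun y y' => {n : ℕ | y n = y' n}.Finite) ∧
      Cardinal.mk D = sInf {c : Cardinal |
        ∃ D' : Set (ℕ → ℕ), IsDominatingFamily D' ∧ Cardinal.mk D' = c} := by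
  set S : Set Cardinal := {c : Cardinal |
        ∃ D' : Set (ℕ → ℕ), IsDominatingFamily D' ∧ Cardinal.mk D' = c} with hS
  have hne : S.Nonempty :=
    ⟨_, Set.univ, fun x => ⟨x, Set.mem_univ x, Eventually.of_forall fun _ => le_rfl⟩, rfl⟩
  obtain ⟨D', hD'dom, hD'card⟩ := csInf_mem hne
  refine ⟨adCode '' D', ?_, ?_, ?_⟩
  · intro x
    obtain ⟨y, hy, hxy⟩ := hD'dom x
    exact ⟨adCode y, Set.mem_image_of_mem _ hy,
      hxy.mono fun n hn => hn.trans (adCode_le y n)⟩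
  · rintro _ ⟨y, hy, rfl⟩ _ ⟨y', hy', rfl⟩ hne'
    have hyy' : y ≠ y' := fun h => hne' (by rw [h])
    obtain ⟨k, hk⟩ := Function.ne_iff.mp hyy'
    refine (Set.finite_Iio k).subset fun n hn => ?_
    by_contra h
    exact adCode_ne hk (not_lt.mp h) hn
  · refine le_antisymm ?_ ?_
    · rw [← hD'card]
      exact Cardinal.mk_image_le
    · refine csInf_le' ?_
      exact ⟨adCode '' D', fun x => by
        obtain ⟨y, hy, hxy⟩ := hD'dom x
        exact ⟨adCode y, Set.mem_image_of_mem _ hy,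
          hxy.mono fun n hn => hn.trans (adCode_le y n)⟩, rfl⟩
end

section
/- For any topological space X, its Wallman compactification W(X), the space of closed ultrafilters with the topology generated by the sets ⟨U⟩ = {F ∈ W(X) : ∃F ∈ F, F ⊆ U} for U open in X, is a compact topological space. -/
open Topology

/-- A closed ultrafilter on a topological space `X`: a family of closed sets
not containing `∅`, closed under binary intersections, and containing every
closed set that meets all of its members. -/
structure ClosedUltrafilter (X : Type*) [TopologicalSpace X] where
  sets : Set (Set X)
  isClosed_mem : ∀ F ∈ sets, IsClosed F
  empty_not_mem : ∅ ∉ sets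
  inter_mem : ∀ A ∈ sets, ∀ B ∈ sets, A ∩ B ∈ sets
  mem_of_meets : ∀ F : Set X, IsClosed F →
    (∀ U ∈ sets, (F ∩ U).Nonempty) → F ∈ sets

/-- The Wallman topology on the space of closed ultrafilters, generated by
the sets `⟨U⟩ = {ℱ : ∃ F ∈ ℱ, F ⊆ U}` for `U` open in `X`. -/
instance wallmanTopology (X : Type*) [TopologicalSpace X] :
    TopologicalSpace (ClosedUltrafilter X) :=
  TopologicalSpace.generateFrom
    {S | ∃ U : Set X, IsOpen U ∧
      S = {ℱ : ClosedUltrafilter X | ∃ F ∈ ℱ.sets, F ⊆ U}}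

/-!
Given an ultrafilter `𝒢` on `W(X)`, the closed sets lying in `𝒢`-almost every member of `W(X)`
form a family closed under finite intersections and avoiding `∅`. By Zorn's lemma it extends to
a closed ultrafilter `ℱ`, and `𝒢` converges to `ℱ`: if a basic neighbourhood `⟨U⟩` of `ℱ` were
not in `𝒢`, then `Uᶜ` would lie in `𝒢`-almost every closed ultrafilter, hence in `ℱ`, which is
impossible since some member of `ℱ` lies inside `U`.
-/

open Set Filter

section

variable {X : Type*} [TopologicalSpace X]

structure IsClosedFilterBase (D : Set (Set X)) : Prop where
  isClosed_mem : ∀ F ∈ D, IsClosed F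
  empty_not_mem : ∅ ∉ D
  inter_mem : ∀ A ∈ D, ∀ B ∈ D, A ∩ B ∈ D

namespace IsClosedFilterBase

theorem sUnion_of_isChain {c : Set (Set (Set X))} (hc : ∀ D ∈ c, IsClosedFilterBase D)
    (hchain : IsChain (· ⊆ ·) c) : IsClosedFilterBase (⋃₀ c) where
  isClosed_mem := by
    rintro F ⟨D, hD, hF⟩
    exact (hc D hD).isClosed_mem F hF
  empty_not_mem := by
    rintro ⟨D, hD, hempty⟩
    exact (hc D hD).empty_not_mem hempty
  inter_mem := by
    rintro A ⟨D, hD, hA⟩ B ⟨D', hD', hB⟩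
    rcases hchain.total hD hD' with h | h
    · exact subset_sUnion_of_mem hD' ((hc D' hD').inter_mem A (h hA) B hB)
    · exact subset_sUnion_of_mem hD ((hc D hD).inter_mem A hA B (h hB))

theorem union_image_inter {E : Set (Set X)} (hE : IsClosedFilterBase E) {F : Set X}
    (hF : IsClosed F) (hmeets : ∀ U ∈ E, (F ∩ U).Nonempty) :
    IsClosedFilterBase (E ∪ (F ∩ ·) '' E) where
  isClosed_mem := by
    rintro G (hG | ⟨U, hU, rfl⟩)
    · exact hE.isClosed_mem G hG
    · exact hF.inter (hE.isClosed_mem U hU)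
  empty_not_mem := by
    rintro (hempty | ⟨U, hU, hempty⟩)
    · exact hE.empty_not_mem hempty
    · exact (hmeets U hU).ne_empty hempty
  inter_mem := by
    rintro A (hA | ⟨U, hU, rfl⟩) B (hB | ⟨V, hV, rfl⟩)
    · exact .inl (hE.inter_mem A hA B hB)
    · exact .inr ⟨A ∩ V, hE.inter_mem A hA V hV, by simp only [inter_left_comm]⟩
    · exact .inr ⟨U ∩ B, hE.inter_mem U hU B hB, by simp only [inter_assoc]⟩
    · exact .inr ⟨U ∩ V, hE.inter_mem U hU V hV, inter_inter_distrib_left F U V⟩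

theorem exists_closedUltrafilter_superset {D : Set (Set X)} (hD : IsClosedFilterBase D)
    (huniv : univ ∈ D) : ∃ ℱ : ClosedUltrafilter X, D ⊆ ℱ.sets := by
  obtain ⟨E, hDE, hmax⟩ := zorn_subset_nonempty {E | IsClosedFilterBase E}
    (fun c hc hchain _ => ⟨⋃₀ c, sUnion_of_isChain hc hchain, fun _ => subset_sUnion_of_mem⟩)
    D hD
  have hE : IsClosedFilterBase E := hmax.prop
  refine ⟨⟨E, hE.isClosed_mem, hE.empty_not_mem, hE.inter_mem, fun F hF hmeets => ?_⟩, hDE⟩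
  have hFE : F ∈ E ∪ (F ∩ ·) '' E := .inr ⟨univ, hDE huniv, inter_univ F⟩
  exact hmax.2 (hE.union_image_inter hF hmeets) subset_union_left hFE

end IsClosedFilterBase

namespace ClosedUltrafilter

theorem univ_mem (ℱ : ClosedUltrafilter X) : univ ∈ ℱ.sets :=
  ℱ.mem_of_meets univ isClosed_univ fun U hU =>
    (univ_inter U).symm ▸ nonempty_iff_ne_empty.2 (ne_of_mem_of_not_mem hU ℱ.empty_not_mem)

theorem compl_mem_iff_not_exists_subset (ℱ : ClosedUltrafilter X) {U : Set X} (hU : IsOpen U) :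
    Uᶜ ∈ ℱ.sets ↔ ¬∃ F ∈ ℱ.sets, F ⊆ U := by
  constructor
  · rintro hUc ⟨F, hF, hFU⟩
    have hempty : F ∩ Uᶜ = ∅ :=
      disjoint_iff_inter_eq_empty.1 (disjoint_compl_right_iff_subset.2 hFU)
    exact ℱ.empty_not_mem (hempty ▸ ℱ.inter_mem F hF Uᶜ hUc)
  · intro hnot
    refine ℱ.mem_of_meets Uᶜ hU.isClosed_compl fun G hG => ?_
    rw [inter_comm, ← not_disjoint_iff_nonempty_inter, disjoint_compl_right_iff_subset]
    exact fun hGU => hnot ⟨G, hG, hGU⟩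

def eventualSets (𝒢 : Filter (ClosedUltrafilter X)) : Set (Set X) :=
  {F | IsClosed F ∧ ∀ᶠ ℱ in 𝒢, F ∈ ℱ.sets}

theorem univ_mem_eventualSets (𝒢 : Filter (ClosedUltrafilter X)) : univ ∈ eventualSets 𝒢 :=
  ⟨isClosed_univ, .of_forall univ_mem⟩

theorem isClosedFilterBase_eventualSets (𝒢 : Filter (ClosedUltrafilter X)) [𝒢.NeBot] :
    IsClosedFilterBase (eventualSets 𝒢) where
  isClosed_mem _ hF := hF.1
  empty_not_mem h := let ⟨ℱ, hℱ⟩ := h.2.exists; ℱ.empty_not_mem hℱ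
  inter_mem A hA B hB := ⟨hA.1.inter hB.1, by
    filter_upwards [hA.2, hB.2] with ℱ hAℱ hBℱ
    exact ℱ.inter_mem A hAℱ B hBℱ⟩

end ClosedUltrafilter

end

open ClosedUltrafilter in
/-- The Wallman compactification `W(X)` of any topological space `X` is
compact. -/
theorem stmt12 (X : Type*) [TopologicalSpace X] :
    CompactSpace (ClosedUltrafilter X) := by
  refine ⟨isCompact_iff_ultrafilter_le_nhds.2 fun 𝒢 _ => ?_⟩
  obtain ⟨ℱ, hℱ⟩ := (isClosedFilterBase_eventualSets 𝒢.toFilter).exists_closedUltrafilter_superset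
    (univ_mem_eventualSets _)
  refine ⟨ℱ, mem_univ ℱ, ?_⟩
  rw [TopologicalSpace.nhds_generateFrom]
  refine le_iInf₂ ?_
  rintro _ ⟨hℱU, U, hU, rfl⟩
  rw [le_principal_iff]
  by_contra hnot
  have hUc : Uᶜ ∈ eventualSets 𝒢.toFilter := by
    refine ⟨hU.isClosed_compl, ?_⟩
    filter_upwards [Ultrafilter.compl_mem_iff_notMem.2 hnot] with 𝒞 h𝒞
    exact (𝒞.compl_mem_iff_not_exists_subset hU).2 h𝒞
  exact (ℱ.compl_mem_iff_not_exists_subset hU).1 (hℱ hUc) hℱU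
end

section
/- There exists a Hausdorff topological space X that is separable, Fréchet–Urysohn, locally countable (hence of countable pseudocharacter), but not regular. -/
open Filter Topology

/-- The convergent sequence 1/(n+1) in ℚ. -/
def mySeq : Set ℚ := Set.range (fun n : ℕ => ((n : ℚ) + 1)⁻¹)

/-- The "deleted sequence" topology on ℚ: the usual topology refined by
making the complement of `mySeq` open. -/
def tQ : TopologicalSpace ℚ :=
  (inferInstance : TopologicalSpace ℚ) ⊓ TopologicalSpace.generateFrom {mySeqᶜ}

lemma tQ_le_std : tQ ≤ (inferInstance : TopologicalSpace ℚ) := inf_le_left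

lemma tQ_le_gen : tQ ≤ TopologicalSpace.generateFrom {mySeqᶜ} := inf_le_right

lemma zero_not_mem_mySeq : (0 : ℚ) ∉ mySeq := by
  rintro ⟨n, hn⟩
  have : ((n : ℚ) + 1) > 0 := by positivity
  simp only [inv_eq_zero] at hn
  exact absurd hn (by positivity)

open scoped Classical in
lemma nhds_gen (a : ℚ) :
    @nhds ℚ (TopologicalSpace.generateFrom {mySeqᶜ}) a
      = if a ∈ mySeq then ⊤ else 𝓟 mySeqᶜ := by
  rw [TopologicalSpace.nhds_generateFrom]
  split_ifs with h
  · have : {s : Set ℚ | a ∈ s ∧ s ∈ ({mySeqᶜ} : Set (Set ℚ))} = ∅ := by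
      ext s; simp only [Set.mem_setOf_eq, Set.mem_singleton_iff, Set.mem_empty_iff_false,
        iff_false, not_and]
      rintro ha rfl; exact ha h
    rw [show (⨅ s ∈ {s : Set ℚ | a ∈ s ∧ s ∈ ({mySeqᶜ} : Set (Set ℚ))}, 𝓟 s)
        = ⨅ s ∈ (∅ : Set (Set ℚ)), 𝓟 s from by rw [this]]
    simp
  · have : {s : Set ℚ | a ∈ s ∧ s ∈ ({mySeqᶜ} : Set (Set ℚ))} = {mySeqᶜ} := by
      ext s; simp only [Set.mem_setOf_eq, Set.mem_singleton_iff]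
      constructor
      · rintro ⟨_, rfl⟩; rfl
      · rintro rfl; exact ⟨h, rfl⟩
    rw [show (⨅ s ∈ {s : Set ℚ | a ∈ s ∧ s ∈ ({mySeqᶜ} : Set (Set ℚ))}, 𝓟 s)
        = ⨅ s ∈ ({mySeqᶜ} : Set (Set ℚ)), 𝓟 s from by rw [this]]
    simp

open scoped Classical in
lemma nhds_tQ (a : ℚ) :
    @nhds ℚ tQ a = 𝓝 a ⊓ (if a ∈ mySeq then ⊤ else 𝓟 mySeqᶜ) := by
  rw [show tQ = (inferInstance : TopologicalSpace ℚ) ⊓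
      TopologicalSpace.generateFrom {mySeqᶜ} from rfl, _root_.nhds_inf, nhds_gen]

lemma mem_nhds_tQ {s : Set ℚ} {a : ℚ} (h : IsOpen[tQ] s) (ha : a ∈ s) :
    s ∈ @nhds ℚ tQ a := by
  letI := tQ; exact h.mem_nhds ha

lemma fc_tQ : @FirstCountableTopology ℚ tQ :=
  @FirstCountableTopology.mk ℚ tQ (fun a => by
    rw [nhds_tQ]; split_ifs <;> exact inferInstance)

/-- There exists a Hausdorff space that is separable, Fréchet–Urysohn,
locally countable (hence of countable pseudocharacter), but not regular. -/
theorem stmt16 :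
    ∃ (X : Type) (_ : TopologicalSpace X), T2Space X ∧
      TopologicalSpace.SeparableSpace X ∧ FrechetUrysohnSpace X ∧
      (∀ x : X, ∃ U ∈ 𝓝 x, U.Countable) ∧
      ¬ RegularSpace X := by
  refine ⟨ℚ, tQ, ?_, ?_, ?_, ?_, ?_⟩
  · -- T2
    exact @T2Space.of_injective_continuous ℚ ℚ tQ (inferInstance)
      (inferInstance) id Function.injective_id (continuous_id_of_le tQ_le_std)
  · -- separable
    exact @TopologicalSpace.SeparableSpace.mk ℚ tQ
      ⟨Set.univ, Set.countable_univ, @dense_univ ℚ tQ⟩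
  · -- Fréchet–Urysohn
    have := fc_tQ
    exact @FirstCountableTopology.frechetUrysohnSpace ℚ tQ fc_tQ
  · -- locally countable
    intro x
    exact ⟨Set.univ, Filter.univ_mem, Set.countable_univ⟩
  · -- not regular
    intro hreg
    have hSopen : IsOpen[tQ] mySeqᶜ :=
      (TopologicalSpace.isOpen_generateFrom_of_mem (g := {mySeqᶜ}) rfl).mono tQ_le_gen
    have h0 : mySeqᶜ ∈ @nhds ℚ tQ 0 := mem_nhds_tQ hSopen zero_not_mem_mySeq
    obtain ⟨C, hC0, hCclosed, hCsub⟩ :=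
      @exists_mem_nhds_isClosed_subset ℚ tQ hreg 0 mySeqᶜ h0
    rw [nhds_tQ, if_neg zero_not_mem_mySeq, Filter.mem_inf_principal] at hC0
    obtain ⟨l, u, ⟨hl0, h0u⟩, hsub⟩ := mem_nhds_iff_exists_Ioo_subset.mp hC0
    obtain ⟨n, hn⟩ := exists_nat_one_div_lt h0u
    set p : ℚ := ((n : ℚ) + 1)⁻¹ with hp_def
    have hpS : p ∈ mySeq := ⟨n, rfl⟩
    have hppos : 0 < p := by positivity
    have hpu : p < u := by rwa [one_div] at hn
    have hpC : p ∉ C := fun h => hCsub h hpS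
    have hCc : Cᶜ ∈ @nhds ℚ tQ p := by
      have ho : IsOpen[tQ] Cᶜ := by letI := tQ; exact hCclosed.isOpen_compl
      exact mem_nhds_tQ ho hpC
    rw [nhds_tQ, if_pos hpS, inf_top_eq] at hCc
    obtain ⟨l', u', ⟨hl'p, hpu'⟩, hsub'⟩ := mem_nhds_iff_exists_Ioo_subset.mp hCc
    have h2pos : (0:ℚ) < (n : ℚ) + 2 := by positivity
    have hmlt : max l' (((n : ℚ) + 2)⁻¹) < p := by
      refine max_lt hl'p ?_
      rw [hp_def, inv_lt_inv₀ h2pos (by positivity)]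
      linarith
    obtain ⟨q, hq1, hq2⟩ := exists_between hmlt
    have hql' : l' < q := lt_of_le_of_lt (le_max_left _ _) hq1
    have hqn2 : (((n : ℚ) + 2)⁻¹) < q := lt_of_le_of_lt (le_max_right _ _) hq1
    have hqpos : 0 < q := lt_trans (by positivity) hqn2
    have hqS : q ∉ mySeq := by
      rintro ⟨k, hk⟩
      have hk1 : (0:ℚ) < (k : ℚ) + 1 := by positivity
      have e : q = ((k : ℚ) + 1)⁻¹ := hk.symm
      have h1 : (k : ℚ) + 1 < (n : ℚ) + 2 := by
        have := hqn2; rw [e] at this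
        exact (inv_lt_inv₀ h2pos hk1).mp this
      have h2 : (n : ℚ) + 1 < (k : ℚ) + 1 := by
        have := hq2; rw [e, hp_def] at this
        exact (inv_lt_inv₀ hk1 (by positivity)).mp this
      have hn_lt : (n : ℚ) < (k : ℚ) := by linarith
      have hk_lt : (k : ℚ) < (n : ℚ) + 1 := by linarith
      have hn_lt' : n < k := by exact_mod_cast hn_lt
      have hk_lt' : k < n + 1 := by exact_mod_cast hk_lt
      omega
    have hqC : q ∈ C := hsub ⟨lt_trans hl0 hqpos, lt_trans hq2 hpu⟩ hqS
    have hqCc : q ∈ Cᶜ := hsub' ⟨hql', lt_trans hq2 hpu'⟩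
    exact hqCc hqC
end

section
/- In a countably compact Hausdorff space Y, for every infinite subset I there exist a point y ∈ Y, a sequence of distinct points (x_n) in I, and sequences of open sets (V_n), (U_n) such that for all n: x_n ∈ V_n ⊆ U_{n-1}, y ∈ U_n ⊆ U_{n-1}, and V_n ∩ U_n = ∅; in particular the V_n are pairwise disjoint. -/
open Filter Topology Function

/-!
Fix an accumulation point `y` of `I`. Every open neighbourhood `U` of `y` contains a point
`x ∈ I` other than `y`, and Hausdorff separation of `x` from `y` inside `U` yields disjoint open
sets `V ∋ x` and `U' ∋ y` contained in `U`. Iterating this step from `U = univ` produces the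
sequences; each `V (n + 1)` lies in `U n`, which misses all earlier `V m`.
-/

theorem Pairwise.injective_of_mem {α ι : Type*} {V : ι → Set α} {x : ι → α}
    (hV : Pairwise (Disjoint on V)) (hx : ∀ i, x i ∈ V i) : Function.Injective x := by
  intro i j hij
  by_contra hne
  exact (hV hne).ne_of_mem (hx i) (hx j) hij

theorem pairwise_disjoint_of_subset_antitone {α : Type*} {V U : ℕ → Set α}
    (hU : Antitone U) (hVU : ∀ n, Disjoint (V n) (U n)) (hV : ∀ n, V (n + 1) ⊆ U n) :
    Pairwise (Disjoint on V) := by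
  refine (pairwise_disjoint_on V).2 fun m n hmn => ?_
  obtain ⟨k, rfl⟩ := Nat.exists_eq_add_of_lt hmn
  exact (hVU m).mono_right ((hV (m + k)).trans (hU (Nat.le_add_right m k)))

section AccPt

variable {Y : Type*} [TopologicalSpace Y] [T2Space Y] {I : Set Y} {y : Y}

theorem AccPt.exists_separated_subset (hy : AccPt y (𝓟 I)) {U : Set Y} (hU : IsOpen U)
    (hyU : y ∈ U) :
    ∃ x ∈ I, ∃ V W : Set Y, IsOpen V ∧ IsOpen W ∧ x ∈ V ∧ y ∈ W ∧ Disjoint V W ∧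
      V ⊆ U ∧ W ⊆ U := by
  obtain ⟨x, ⟨hxU, hxI⟩, hxy⟩ := accPt_iff_nhds.mp hy U (hU.mem_nhds hyU)
  obtain ⟨A, B, hA, hB, hxA, hyB, hAB⟩ := t2_separation hxy
  exact ⟨x, hxI, A ∩ U, B ∩ U, hA.inter hU, hB.inter hU, ⟨hxA, hxU⟩, ⟨hyB, hyU⟩,
    hAB.mono Set.inter_subset_left Set.inter_subset_left,
    Set.inter_subset_right, Set.inter_subset_right⟩

theorem AccPt.exists_nested_separation (hy : AccPt y (𝓟 I)) :
    ∃ (x : ℕ → Y) (V U : ℕ → Set Y), (∀ n, x n ∈ I) ∧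
      (∀ n, IsOpen (V n) ∧ IsOpen (U n) ∧ x n ∈ V n ∧ y ∈ U n ∧ Disjoint (V n) (U n)) ∧
      (∀ n, V (n + 1) ⊆ U n ∧ U (n + 1) ⊆ U n) := by
  choose x hxI V W hVo hWo hxV hyW hVW hVU hWU using
    fun U : {U : Set Y // IsOpen U ∧ y ∈ U} => hy.exists_separated_subset U.2.1 U.2.2
  let next (U : {U : Set Y // IsOpen U ∧ y ∈ U}) : {U : Set Y // IsOpen U ∧ y ∈ U} :=
    ⟨W U, hWo U, hyW U⟩
  let nbhd (n : ℕ) : {U : Set Y // IsOpen U ∧ y ∈ U} :=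
    Nat.rec ⟨Set.univ, isOpen_univ, trivial⟩ (fun _ => next) n
  exact ⟨fun n => x (nbhd n), fun n => V (nbhd n), fun n => W (nbhd n),
    fun n => hxI _, fun n => ⟨hVo _, hWo _, hxV _, hyW _, hVW _⟩,
    fun n => ⟨hVU (nbhd (n + 1)), hWU (nbhd (n + 1))⟩⟩

end AccPt

/-- In a countably compact Hausdorff space `Y`, for every infinite `I ⊆ Y`
there exist a point `y`, distinct points `x_n ∈ I` and open sets `V_n, U_n`
with `x_n ∈ V_n ⊆ U_{n-1}`, `y ∈ U_n ⊆ U_{n-1}` and `V_n ∩ U_n = ∅`; in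
particular the `V_n` are pairwise disjoint. -/
theorem stmt19 {Y : Type*} [TopologicalSpace Y] [T2Space Y]
    (hcc : ∀ S : Set Y, S.Infinite → ∃ y : Y, AccPt y (𝓟 S))
    (I : Set Y) (hI : I.Infinite) :
    ∃ (y : Y) (x : ℕ → Y) (V U : ℕ → Set Y),
      Function.Injective x ∧ (∀ n, x n ∈ I) ∧
      (∀ n, IsOpen (V n) ∧ IsOpen (U n) ∧ x n ∈ V n ∧ y ∈ U n ∧
        V n ∩ U n = ∅) ∧
      (∀ n, V (n + 1) ⊆ U n ∧ U (n + 1) ⊆ U n) ∧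
      Pairwise (Function.onFun Disjoint V) := by
  obtain ⟨y, hy⟩ := hcc I hI
  obtain ⟨x, V, U, hxI, hopen, hnest⟩ := hy.exists_nested_separation
  have hdisj : Pairwise (Disjoint on V) :=
    pairwise_disjoint_of_subset_antitone (antitone_nat_of_succ_le fun n => (hnest n).2)
      (fun n => (hopen n).2.2.2.2) fun n => (hnest n).1
  refine ⟨y, x, V, U, hdisj.injective_of_mem fun n => (hopen n).2.2.1, hxI,
    fun n => ?_, hnest, hdisj⟩
  obtain ⟨hVo, hUo, hxV, hyU, hVU⟩ := hopen n
  exact ⟨hVo, hUo, hxV, hyU, Set.disjoint_iff_inter_eq_empty.mp hVU⟩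
end
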